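/- arXiv:2401.16613 — 5 statements merged into one kernel-verified Lean document; each statement's English description precedes it below -/
import Mathlib

section
/- Let s1, s2 ≥ 1 be strides, k1, k2 ≥ 1 filter sizes, d2 ≥ 1, and set d1 = k2 + (d2−1)s2 and d0 = k1 + (d1−1)s1. For any filters w1 ∈ ℝ^{k1} and w2 ∈ ℝ^{k2}, the composition α_{w2,s2} ∘ α_{w1,s1} : ℝ^{d0} → ℝ^{d2} equals the single convolution α_{w, s1·s2}, where w ∈ ℝ^{k1 + s1(k2−1)} is the filter with entries w[j] = Σ_b w2[b]·w1[j − s1·b], the sum running over all b with 0 ≤ b ≤ k2−1 and 0 ≤ j − s1·b ≤ k1−1 (note d0 = (k1 + s1(k2−1)) + (d2−1)·s1·s2). -/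
/-- Convolution with filter `w : Fin k → ℝ` and stride `s`, as a map
`(Fin d → ℝ) → (Fin d' → ℝ)`: the `i`-th output entry is `∑ j, w j * x (i*s + j)`
(out-of-range indices contribute `0`, which does not occur when `d = k + (d'-1)*s`). -/
def conv {k : ℕ} (s d d' : ℕ) (w : Fin k → ℝ) (x : Fin d → ℝ) : Fin d' → ℝ :=
  fun i => ∑ j : Fin k,
    if h : i.val * s + j.val < d then w j * x ⟨i.val * s + j.val, h⟩ else 0

theorem stmt_0 (s1 s2 k1 k2 d2 : ℕ) (hs1 : 1 ≤ s1) (hs2 : 1 ≤ s2)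
    (hk1 : 1 ≤ k1) (hk2 : 1 ≤ k2) (hd2 : 1 ≤ d2)
    (d1 d0 : ℕ) (hd1 : d1 = k2 + (d2 - 1) * s2) (hd0 : d0 = k1 + (d1 - 1) * s1)
    (w1 : Fin k1 → ℝ) (w2 : Fin k2 → ℝ) :
    (conv s2 d1 d2 w2 ∘ conv s1 d0 d1 w1) =
      conv (s1 * s2) d0 d2
        (fun j : Fin (k1 + s1 * (k2 - 1)) =>
          ∑ b : Fin k2,
            if h : s1 * b.val ≤ j.val ∧ j.val - s1 * b.val < k1
              then w2 b * w1 ⟨j.val - s1 * b.val, h.2⟩ else 0) ∧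
    d0 = (k1 + s1 * (k2 - 1)) + (d2 - 1) * (s1 * s2) := by
  have hd1pos : 1 ≤ d1 := by omega
  have hdim : d0 = (k1 + s1 * (k2 - 1)) + (d2 - 1) * (s1 * s2) := by
    have h1 : d1 - 1 = (k2 - 1) + (d2 - 1) * s2 := by omega
    rw [hd0, h1, Nat.add_mul]
    generalize k2 - 1 = m
    generalize d2 - 1 = n
    ring
  refine ⟨?_, hdim⟩
  funext x i
  have hA : ∀ b : Fin k2, i.val * s2 + b.val < d1 := by
    intro b
    have h2 : i.val * s2 ≤ (d2 - 1) * s2 := Nat.mul_le_mul_right _ (by omega)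
    omega
  have hB : ∀ p : ℕ, p < d1 → ∀ a : ℕ, a < k1 → p * s1 + a < d0 := by
    intro p hp a ha
    have h2 : p * s1 ≤ (d1 - 1) * s1 := Nat.mul_le_mul_right _ (by omega)
    omega
  have hC : ∀ j : ℕ, j < k1 + s1 * (k2 - 1) → i.val * (s1 * s2) + j < d0 := by
    intro j hj
    have h2 : i.val * (s1 * s2) ≤ (d2 - 1) * (s1 * s2) :=
      Nat.mul_le_mul_right _ (by omega)
    omega
  have hD : ∀ (b : Fin k2) (a : Fin k1), s1 * b.val + a.val < k1 + s1 * (k2 - 1) := by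
    intro b a
    have h2 : s1 * b.val ≤ s1 * (k2 - 1) := Nat.mul_le_mul_left _ (by omega)
    omega
  simp only [Function.comp_apply, conv]
  trans (∑ b : Fin k2, ∑ a : Fin k1,
      w2 b * (w1 a * x ⟨i.val * (s1 * s2) + (s1 * b.val + a.val), hC _ (hD b a)⟩))
  · refine Finset.sum_congr rfl fun b _ => ?_
    rw [dif_pos (hA b), Finset.mul_sum]
    refine Finset.sum_congr rfl fun a _ => ?_
    rw [dif_pos (hB _ (hA b) _ a.isLt)]
    congr 2
    exact congrArg x (Fin.ext (by push_cast; ring))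
  · symm
    calc (∑ j : Fin (k1 + s1 * (k2 - 1)),
        if h : i.val * (s1 * s2) + j.val < d0 then
          (∑ b : Fin k2,
            if h2 : s1 * b.val ≤ j.val ∧ j.val - s1 * b.val < k1
              then w2 b * w1 ⟨j.val - s1 * b.val, h2.2⟩ else 0) *
            x ⟨i.val * (s1 * s2) + j.val, h⟩
        else 0)
        = ∑ j : Fin (k1 + s1 * (k2 - 1)), ∑ b : Fin k2,
            if h2 : s1 * b.val ≤ j.val ∧ j.val - s1 * b.val < k1
              then w2 b * w1 ⟨j.val - s1 * b.val, h2.2⟩ *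
                x ⟨i.val * (s1 * s2) + j.val, hC _ j.isLt⟩ else 0 := by
          refine Finset.sum_congr rfl fun j _ => ?_
          rw [dif_pos (hC _ j.isLt), Finset.sum_mul]
          refine Finset.sum_congr rfl fun b _ => ?_
          split <;> simp
      _ = ∑ b : Fin k2, ∑ j : Fin (k1 + s1 * (k2 - 1)),
            if h2 : s1 * b.val ≤ j.val ∧ j.val - s1 * b.val < k1
              then w2 b * w1 ⟨j.val - s1 * b.val, h2.2⟩ *
                x ⟨i.val * (s1 * s2) + j.val, hC _ j.isLt⟩ else 0 :=
          Finset.sum_comm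
      _ = ∑ b : Fin k2, ∑ a : Fin k1,
            w2 b * (w1 a * x ⟨i.val * (s1 * s2) + (s1 * b.val + a.val), hC _ (hD b a)⟩) := by
          refine Finset.sum_congr rfl fun b _ => ?_
          set e : Fin k1 → Fin (k1 + s1 * (k2 - 1)) := fun a => ⟨s1 * b.val + a.val, hD b a⟩
            with he
          have hinj : Function.Injective e := by
            intro a a' h
            have := congrArg Fin.val h
            simp only [he] at this
            exact Fin.ext (by omega)
          have h0 : ∀ j ∈ (Finset.univ : Finset (Fin (k1 + s1 * (k2 - 1)))),
              j ∉ Finset.univ.image e →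
              (if h2 : s1 * b.val ≤ j.val ∧ j.val - s1 * b.val < k1
                then w2 b * w1 ⟨j.val - s1 * b.val, h2.2⟩ *
                  x ⟨i.val * (s1 * s2) + j.val, hC _ j.isLt⟩ else 0) = 0 := by
            intro j _ hj
            rw [dif_neg]
            intro hcond
            exact hj (Finset.mem_image.mpr ⟨⟨j.val - s1 * b.val, hcond.2⟩,
              Finset.mem_univ _, Fin.ext (by simp only [he]; omega)⟩)
          rw [← Finset.sum_subset (Finset.subset_univ _) h0,
            Finset.sum_image (fun a _ a' _ h => hinj h)]
          refine Finset.sum_congr rfl fun a _ => ?_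
          have hcond : s1 * b.val ≤ (e a).val ∧ (e a).val - s1 * b.val < k1 := by
            simp only [he]; omega
          rw [dif_pos hcond]
          have hval : (e a).val - s1 * b.val = a.val := by simp only [he]; omega
          have : (⟨(e a).val - s1 * b.val, hcond.2⟩ : Fin k1) = a := Fin.ext hval
          rw [this, mul_assoc]
end

section
/- Let L ≥ 1, let k_1,…,k_L ≥ 1 be filter sizes and s_1,…,s_L ≥ 1 strides, set S_ℓ := s_1⋯s_{ℓ−1} (S_1 = 1) and k := k_1 + Σ_{ℓ=2}^L (k_ℓ−1)S_ℓ. Fix d_L ≥ 1 and define d_{ℓ−1} = k_ℓ + (d_ℓ−1)s_ℓ for ℓ = L,…,1. Then for any filters w_ℓ ∈ ℝ^{k_ℓ}, the composition α_{w_L,s_L} ∘ ⋯ ∘ α_{w_1,s_1} : ℝ^{d_0} → ℝ^{d_L} equals the convolution α_{w, s_1⋯s_L}, where w ∈ ℝ^{k} is the unique filter satisfying π_1(w) = π_{S_L}(w_L) · π_{S_{L−1}}(w_{L−1}) ⋯ π_{S_2}(w_2) · π_1(w_1); in particular d_0 = k + (d_L−1)·s_1⋯s_L. -/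
/-- The composition `α_{w_{L-1},s_{L-1}} ∘ ⋯ ∘ α_{w_0,s_0}` of convolutional layers,
where layer `i` maps `ℝ^{d i} → ℝ^{d (i+1)}` using filter `w i` of size `k i` and
stride `s i`. -/
def chainConv (k s d : ℕ → ℕ) (w : (i : ℕ) → Fin (k i) → ℝ) :
    (L : ℕ) → (Fin (d 0) → ℝ) → (Fin (d L) → ℝ)
  | 0 => id
  | (L + 1) => fun x => conv (s L) (d L) (d (L + 1)) (w L) (chainConv k s d w L x)

/-- `π_s(w) = ∑_{j=0}^{k-1} w[j] · x^{s(k-1-j)} · y^{s·j}`. -/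
noncomputable def piP (s : ℕ) {k : ℕ} (w : Fin k → ℝ) : MvPolynomial (Fin 2) ℝ :=
  ∑ j : Fin k, MvPolynomial.C (w j) * MvPolynomial.X 0 ^ (s * (k - 1 - j.val)) *
    MvPolynomial.X 1 ^ (s * j.val)

open Finset MvPolynomial

noncomputable section CNNAux

def extF {d : ℕ} (x : Fin d → ℝ) : ℕ → ℝ := fun n => if h : n < d then x ⟨n, h⟩ else 0

def comp2 {m k : ℕ} (σ : ℕ) (u : Fin m → ℝ) (w : Fin k → ℝ) :
    Fin (m + (k - 1) * σ) → ℝ :=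
  fun t => ∑ j ∈ range k,
    if σ * j ≤ t.val ∧ t.val - σ * j < m then extF w j * extF u (t.val - σ * j) else 0

lemma sum_shift {M : Type*} [AddCommMonoid M] (a m T : ℕ) (hjm : a + m ≤ T) (H : ℕ → M) :
    (∑ t ∈ range T, if a ≤ t ∧ t - a < m then H t else 0)
      = ∑ i ∈ range m, H (a + i) := by
  classical
  rw [← Finset.sum_filter]
  have hfil : (range T).filter (fun t => a ≤ t ∧ t - a < m) = Finset.Ico a (a + m) := by
    ext t
    simp only [Finset.mem_filter, Finset.mem_range, Finset.mem_Ico]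
    omega
  rw [hfil, Finset.sum_Ico_eq_sum_range, Nat.add_sub_cancel_left]

lemma conv_apply {k : ℕ} (s d d' : ℕ) (w : Fin k → ℝ) (x : Fin d → ℝ) (i : Fin d') :
    conv s d d' w x i = ∑ j ∈ range k, extF w j * extF x (i.val * s + j) := by
  show (∑ j : Fin k, if h : i.val * s + j.val < d then w j * x ⟨i.val * s + j.val, h⟩ else 0) = _
  have h1 : ∀ j : Fin k,
      (if h : i.val * s + j.val < d then w j * x ⟨i.val * s + j.val, h⟩ else 0)
        = extF w j.val * extF x (i.val * s + j.val) := by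
    intro j
    by_cases h : i.val * s + j.val < d
    · rw [dif_pos h, extF, extF, dif_pos h, dif_pos j.isLt]
    · rw [dif_neg h, extF, extF, dif_neg h, mul_zero]
  calc (∑ j : Fin k, if h : i.val * s + j.val < d then w j * x ⟨i.val * s + j.val, h⟩ else 0)
      = ∑ j : Fin k, extF w j.val * extF x (i.val * s + j.val) :=
        Finset.sum_congr rfl (fun j _ => h1 j)
    _ = _ := Fin.sum_univ_eq_sum_range (fun j => extF w j * extF x (i.val * s + j)) k

lemma extF_conv {m : ℕ} (σ d0 d1 : ℕ) (u : Fin m → ℝ) (x : Fin d0 → ℝ) (n : ℕ) (hn : n < d1) :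
    extF (conv σ d0 d1 u x) n = ∑ j' ∈ range m, extF u j' * extF x (n * σ + j') := by
  rw [extF, dif_pos hn]
  exact conv_apply σ d0 d1 u x ⟨n, hn⟩

lemma extF_comp2 {m k : ℕ} (σ : ℕ) (u : Fin m → ℝ) (w : Fin k → ℝ) (t : ℕ)
    (ht : t < m + (k - 1) * σ) :
    extF (comp2 σ u w) t
      = ∑ j ∈ range k, if σ * j ≤ t ∧ t - σ * j < m then extF w j * extF u (t - σ * j) else 0 := by
  rw [extF, dif_pos ht]
  rfl

lemma conv_comp {m k : ℕ} (σ s d0 d1 d2 : ℕ) (hm : 1 ≤ m) (hk : 1 ≤ k)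
    (hd0 : d0 = m + (d1 - 1) * σ) (hd1 : d1 = k + (d2 - 1) * s)
    (u : Fin m → ℝ) (w : Fin k → ℝ) (x : Fin d0 → ℝ) :
    conv s d1 d2 w (conv σ d0 d1 u x) = conv (σ * s) d0 d2 (comp2 σ u w) x := by
  funext i
  have hi2 : i.val ≤ d2 - 1 := by have := i.isLt; omega
  have his : i.val * s ≤ (d2 - 1) * s := Nat.mul_le_mul_right s hi2
  have hE : conv s d1 d2 w (conv σ d0 d1 u x) i
      = ∑ j ∈ range k, ∑ j' ∈ range m,
          extF w j * extF u j' * extF x (i.val * (σ * s) + (σ * j + j')) := by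
    rw [conv_apply]
    refine Finset.sum_congr rfl fun j hj => ?_
    rw [mem_range] at hj
    have hlt : i.val * s + j < d1 := by omega
    rw [extF_conv σ d0 d1 u x _ hlt, Finset.mul_sum]
    refine Finset.sum_congr rfl fun j' _ => ?_
    have harith : (i.val * s + j) * σ + j' = i.val * (σ * s) + (σ * j + j') := by ring
    rw [harith, mul_assoc]
  have hR : conv (σ * s) d0 d2 (comp2 σ u w) x i
      = ∑ j ∈ range k, ∑ j' ∈ range m,
          extF w j * extF u j' * extF x (i.val * (σ * s) + (σ * j + j')) := by
    rw [conv_apply]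
    have step1 : ∀ t ∈ range (m + (k - 1) * σ),
        extF (comp2 σ u w) t * extF x (i.val * (σ * s) + t)
          = ∑ j ∈ range k, if σ * j ≤ t ∧ t - σ * j < m then
              extF w j * extF u (t - σ * j) * extF x (i.val * (σ * s) + t) else 0 := by
      intro t ht
      rw [mem_range] at ht
      rw [extF_comp2 σ u w t ht, Finset.sum_mul]
      refine Finset.sum_congr rfl fun j _ => ?_
      rw [ite_mul, zero_mul]
    rw [Finset.sum_congr rfl step1, Finset.sum_comm]
    refine Finset.sum_congr rfl fun j hj => ?_
    rw [mem_range] at hj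
    have hσj : σ * j ≤ σ * (k - 1) := Nat.mul_le_mul_left σ (by omega)
    have hcm : (k - 1) * σ = σ * (k - 1) := mul_comm _ _
    have hT : σ * j + m ≤ m + (k - 1) * σ := by omega
    rw [sum_shift (σ * j) m _ hT]
    refine Finset.sum_congr rfl fun j' _ => ?_
    rw [Nat.add_sub_cancel_left]
  rw [hE, hR]

lemma piP_eq {k : ℕ} (s : ℕ) (w : Fin k → ℝ) :
    piP s w = ∑ j ∈ range k, MvPolynomial.C (extF w j) *
      MvPolynomial.X 0 ^ (s * (k - 1 - j)) * MvPolynomial.X 1 ^ (s * j) := by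
  rw [piP]
  refine Eq.trans ?_ (Fin.sum_univ_eq_sum_range _ k)
  exact Finset.sum_congr rfl (fun j _ => by rw [extF, dif_pos j.isLt])

lemma piP_comp2 {m k : ℕ} (σ : ℕ) (hm : 1 ≤ m) (hk : 1 ≤ k)
    (u : Fin m → ℝ) (w : Fin k → ℝ) :
    piP 1 (comp2 σ u w) = piP 1 u * piP σ w := by
  classical
  have hL : piP 1 (comp2 σ u w) = ∑ j ∈ range k, ∑ j' ∈ range m,
      MvPolynomial.C (extF w j) * MvPolynomial.C (extF u j') *
        MvPolynomial.X 0 ^ (m + (k - 1) * σ - 1 - (σ * j + j')) *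
        MvPolynomial.X 1 ^ (σ * j + j') := by
    rw [piP_eq]
    simp only [one_mul]
    have step1 : ∀ t ∈ range (m + (k - 1) * σ),
        MvPolynomial.C (extF (comp2 σ u w) t) *
            (MvPolynomial.X 0 : MvPolynomial (Fin 2) ℝ) ^ (m + (k - 1) * σ - 1 - t) *
            MvPolynomial.X 1 ^ t
          = ∑ j ∈ range k, if σ * j ≤ t ∧ t - σ * j < m then
              MvPolynomial.C (extF w j) * MvPolynomial.C (extF u (t - σ * j)) *
                MvPolynomial.X 0 ^ (m + (k - 1) * σ - 1 - t) * MvPolynomial.X 1 ^ t else 0 := by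
      intro t ht
      rw [mem_range] at ht
      rw [extF_comp2 σ u w t ht, map_sum, Finset.sum_mul, Finset.sum_mul]
      refine Finset.sum_congr rfl fun j _ => ?_
      rw [apply_ite MvPolynomial.C, map_zero, map_mul, ite_mul, ite_mul, zero_mul, zero_mul]
    refine Eq.trans (Finset.sum_congr rfl step1) ?_
    rw [Finset.sum_comm]
    refine Finset.sum_congr rfl fun j hj => ?_
    rw [mem_range] at hj
    have hσj : σ * j ≤ σ * (k - 1) := Nat.mul_le_mul_left σ (by omega)
    have hcm : (k - 1) * σ = σ * (k - 1) := mul_comm _ _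
    have hT : σ * j + m ≤ m + (k - 1) * σ := by omega
    rw [sum_shift (σ * j) m _ hT]
    refine Finset.sum_congr rfl fun j' _ => ?_
    rw [Nat.add_sub_cancel_left]
  have hR : piP 1 u * piP σ w = ∑ j ∈ range k, ∑ j' ∈ range m,
      MvPolynomial.C (extF w j) * MvPolynomial.C (extF u j') *
        MvPolynomial.X 0 ^ (m + (k - 1) * σ - 1 - (σ * j + j')) *
        MvPolynomial.X 1 ^ (σ * j + j') := by
    rw [piP_eq, piP_eq, Finset.sum_mul_sum, Finset.sum_comm]
    simp only [one_mul]
    refine Finset.sum_congr rfl fun j hj => Finset.sum_congr rfl fun j' hj' => ?_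
    rw [mem_range] at hj hj'
    have h3 : σ * (k - 1 - j) + σ * j = (k - 1) * σ := by
      rw [← Nat.mul_add, Nat.sub_add_cancel (by omega), mul_comm]
    have e1 : (m - 1 - j') + σ * (k - 1 - j) = m + (k - 1) * σ - 1 - (σ * j + j') := by omega
    have e2 : j' + σ * j = σ * j + j' := by omega
    rw [← e1, ← e2, pow_add, pow_add]
    ring
  rw [hL, hR]

lemma conv_cast {k k' : ℕ} (h : k = k') (s d d' : ℕ) (w : Fin k' → ℝ) :
    conv s d d' (fun j : Fin k => w (Fin.cast h j)) = conv s d d' w := by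
  subst h; rfl

lemma piP_cast {k k' : ℕ} (h : k = k') (s : ℕ) (w : Fin k' → ℝ) :
    piP s (fun j : Fin k => w (Fin.cast h j)) = piP s w := by
  subst h; rfl

lemma coeff_piP_one {K : ℕ} (v : Fin K → ℝ) (j : Fin K) :
    MvPolynomial.coeff (Finsupp.single 0 (K - 1 - j.val) + Finsupp.single 1 j.val) (piP 1 v)
      = v j := by
  classical
  rw [piP, MvPolynomial.coeff_sum]
  rw [Finset.sum_eq_single j]
  · simp [MvPolynomial.X_pow_eq_monomial, MvPolynomial.C_mul_monomial,
      MvPolynomial.monomial_mul, MvPolynomial.coeff_monomial]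
  · intro b _ hbj
    simp only [one_mul, MvPolynomial.X_pow_eq_monomial, MvPolynomial.C_mul_monomial,
      MvPolynomial.monomial_mul, MvPolynomial.coeff_monomial, mul_one]
    rw [if_neg]
    intro hEq
    apply hbj
    have h1 := DFunLike.congr_fun hEq (1 : Fin 2)
    simp [Finsupp.single_apply] at h1
    exact Fin.ext h1
  · intro hj; exact absurd (Finset.mem_univ j) hj

lemma piP_one_inj {K : ℕ} {a b : Fin K → ℝ} (h : piP 1 a = piP 1 b) : a = b := by
  funext j
  rw [← coeff_piP_one a j, ← coeff_piP_one b j, h]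

lemma helper (k s d S : ℕ → ℕ) (hS : ∀ i, S i = ∏ j ∈ Finset.range i, s j)
    (w : (i : ℕ) → Fin (k i) → ℝ) :
    ∀ L, 1 ≤ L → (∀ i < L, 1 ≤ k i) → (∀ i < L, 1 ≤ s i) →
      (∀ i < L, d i = k i + (d (i + 1) - 1) * s i) →
      ∃ v : Fin (k 0 + ∑ i ∈ Finset.Ico 1 L, (k i - 1) * S i) → ℝ,
        piP 1 v = ∏ i ∈ Finset.range L, piP (S i) (w i) ∧
        chainConv k s d w L = conv (∏ i ∈ Finset.range L, s i) (d 0) (d L) v ∧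
        d 0 = (k 0 + ∑ i ∈ Finset.Ico 1 L, (k i - 1) * S i)
            + (d L - 1) * ∏ i ∈ Finset.range L, s i := by
  intro L
  induction L with
  | zero => intro h; omega
  | succ L ih =>
    intro _ hk hs hd
    by_cases hL0 : L = 0
    · subst hL0
      have h0 : k 0 + ∑ i ∈ Finset.Ico 1 1, (k i - 1) * S i = k 0 := by simp
      refine ⟨fun j => w 0 (Fin.cast h0 j), ?_, ?_, ?_⟩
      · rw [piP_cast h0, Finset.prod_range_one, hS 0, Finset.prod_range_zero]
      · rw [Finset.prod_range_one, conv_cast h0]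
        rfl
      · simp only [Finset.Ico_self, Finset.sum_empty, add_zero, zero_add, Finset.prod_range_one]
        exact hd 0 (by omega)
    · have hL1 : 1 ≤ L := by omega
      obtain ⟨v, hv1, hv2, hv3⟩ := ih hL1 (fun i hi => hk i (by omega))
        (fun i hi => hs i (by omega)) (fun i hi => hd i (by omega))
      rw [← hS L] at hv2 hv3
      have hkL : 1 ≤ k L := hk L (by omega)
      have hm : 1 ≤ k 0 + ∑ i ∈ Finset.Ico 1 L, (k i - 1) * S i := by
        have := hk 0 (by omega); omega
      have hsum : k 0 + ∑ i ∈ Finset.Ico 1 (L + 1), (k i - 1) * S i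
          = (k 0 + ∑ i ∈ Finset.Ico 1 L, (k i - 1) * S i) + (k L - 1) * S L := by
        rw [Finset.sum_Ico_succ_top hL1, ← add_assoc]
      refine ⟨fun j => comp2 (S L) v (w L) (Fin.cast hsum j), ?_, ?_, ?_⟩
      · rw [piP_cast hsum, piP_comp2 (S L) hm hkL, hv1, Finset.prod_range_succ]
      · rw [Finset.prod_range_succ, ← hS L, conv_cast hsum]
        funext x
        show conv (s L) (d L) (d (L + 1)) (w L) (chainConv k s d w L x) = _
        rw [hv2]
        exact conv_comp (S L) (s L) (d 0) (d L) (d (L + 1)) hm hkL hv3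
          (hd L (by omega)) v (w L) x
      · rw [Finset.prod_range_succ, ← hS L, hsum, hv3]
        have h5 : d L - 1 = (k L - 1) + (d (L + 1) - 1) * s L := by
          have h6 := hd L (by omega)
          omega
        rw [h5]
        ring

end CNNAux

theorem stmt_1 (L : ℕ) (hL : 1 ≤ L) (k s : ℕ → ℕ)
    (hk : ∀ i < L, 1 ≤ k i) (hs : ∀ i < L, 1 ≤ s i)
    (d : ℕ → ℕ) (hdL : 1 ≤ d L) (hd : ∀ i < L, d i = k i + (d (i + 1) - 1) * s i)
    (S : ℕ → ℕ) (hS : ∀ i, S i = ∏ j ∈ Finset.range i, s j)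
    (K : ℕ) (hK : K = k 0 + ∑ i ∈ Finset.Ico 1 L, (k i - 1) * S i)
    (w : (i : ℕ) → Fin (k i) → ℝ) :
    (∃! v : Fin K → ℝ, piP 1 v = ∏ i ∈ Finset.range L, piP (S i) (w i)) ∧
    (∀ v : Fin K → ℝ, piP 1 v = ∏ i ∈ Finset.range L, piP (S i) (w i) →
      chainConv k s d w L = conv (∏ i ∈ Finset.range L, s i) (d 0) (d L) v) ∧
    d 0 = K + (d L - 1) * ∏ i ∈ Finset.range L, s i := by
  obtain ⟨c, hc1, hc2, hc3⟩ := helper k s d S hS w L hL hk hs hd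
  have hpi : piP 1 (fun j : Fin K => c (Fin.cast hK j))
      = ∏ i ∈ Finset.range L, piP (S i) (w i) := by
    rw [piP_cast hK]; exact hc1
  refine ⟨⟨fun j => c (Fin.cast hK j), hpi, fun y hy => piP_one_inj (hy.trans hpi.symm)⟩,
    ?_, ?_⟩
  · intro v hv
    have hveq : v = fun j : Fin K => c (Fin.cast hK j) := piP_one_inj (hv.trans hpi.symm)
    rw [hveq, conv_cast hK]
    exact hc2
  · rw [hK]
    exact hc3
end

section
/- Let L ≥ 1, filter sizes k_1,…,k_L ≥ 1, strides s_1,…,s_L ≥ 1, S_ℓ := s_1⋯s_{ℓ−1}, k := k_1 + Σ_{ℓ=2}^L (k_ℓ−1)S_ℓ, d_L ≥ 1, and d_{ℓ−1} = k_ℓ + (d_ℓ−1)s_ℓ. For w ∈ ℝ^k the following are equivalent: (i) there exist filters w_ℓ ∈ ℝ^{k_ℓ} (1 ≤ ℓ ≤ L) with α_{w, s_1⋯s_L} = α_{w_L,s_L} ∘ ⋯ ∘ α_{w_1,s_1} as linear maps ℝ^{d_0} → ℝ^{d_L}; (ii) the homogeneous polynomial π_1(w) ∈ ℝ[x,y]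 of degree k−1 admits a factorization π_1(w) = P_L ⋯ P_1 where each P_ℓ ∈ ℝ[x,y] is homogeneous of degree S_ℓ(k_ℓ−1) and all monomials of P_ℓ involve only x^{S_ℓ} and y^{S_ℓ}. -/
open Finset Polynomial

section StridedConv

variable {R : Type*} [CommSemiring R]

noncomputable def stridedConv (s : ℕ) (f : ℕ → R) (i : ℕ) : R[X] →ₗ[R] R :=
  lsum fun j => LinearMap.mulRight R (f (i * s + j))

@[simp]
lemma stridedConv_monomial (s : ℕ) (f : ℕ → R) (i n : ℕ) (c : R) :
    stridedConv s f i (monomial n c) = c * f (i * s + n) := by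
  simp [stridedConv, sum_monomial_index]

lemma stridedConv_stridedConv (s₀ s₁ : ℕ) (f : ℕ → R) (p q : R[X]) (i : ℕ) :
    stridedConv s₁ (fun t => stridedConv s₀ f t p) i q =
      stridedConv (s₀ * s₁) f i (p * expand R s₀ q) := by
  induction q using Polynomial.induction_on' with
  | add q q' hq hq' => simp only [map_add, mul_add, hq, hq']
  | monomial j c =>
    induction p using Polynomial.induction_on' with
    | add p p' hp hp' =>
      rw [stridedConv_monomial] at hp hp' ⊢
      rw [map_add, mul_add, hp, hp', add_mul, map_add]
    | monomial m a =>
      simp only [stridedConv_monomial, expand_monomial, monomial_mul_monomial]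
      ring_nf

lemma stridedConv_single_zero (s t : ℕ) (p : R[X]) :
    stridedConv s (Pi.single t 1) 0 p = p.coeff t := by
  induction p using Polynomial.induction_on' with
  | add p q hp hq => simp only [map_add, coeff_add, hp, hq]
  | monomial n c => simp [coeff_monomial, Pi.single_apply, eq_comm]

end StridedConv

lemma conv_apply_eq_stridedConv {k s d d' : ℕ} (hd : k + (d' - 1) * s ≤ d) (w : Fin k → ℝ)
    {x : Fin d → ℝ} {f : ℕ → ℝ} (hxf : ∀ t, x t = f t) (i : Fin d') :
    conv s d d' w x i = stridedConv s f i (ofFn k w) := by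
  rw [ofFn_eq_sum_monomial, map_sum]
  refine sum_congr rfl fun j _ => ?_
  have hij : i * s + j < d := by
    have := Nat.mul_le_mul_right s (Nat.le_sub_one_of_lt i.isLt)
    omega
  rw [dif_pos hij, hxf, stridedConv_monomial]

noncomputable def compositeFilter (k s : ℕ → ℕ) (w : (i : ℕ) → Fin (k i) → ℝ) (L : ℕ) : ℝ[X] :=
  ∏ i ∈ range L, expand ℝ (∏ j ∈ range i, s j) (ofFn (k i) (w i))

lemma chainConv_apply_eq_stridedConv {k s d : ℕ → ℕ} {L : ℕ}
    (hd : ∀ i < L, k i + (d (i + 1) - 1) * s i ≤ d i) (w : (i : ℕ) → Fin (k i) → ℝ)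
    {x : Fin (d 0) → ℝ} {f : ℕ → ℝ} (hxf : ∀ t, x t = f t) (i : Fin (d L)) :
    chainConv k s d w L x i = stridedConv (∏ j ∈ range L, s j) f i (compositeFilter k s w L) := by
  induction L with
  | zero =>
    rw [compositeFilter, prod_range_zero, prod_range_zero, ← C_1, ← monomial_zero_left,
      stridedConv_monomial]
    simp [chainConv, hxf]
  | succ L ih =>
    have hL := conv_apply_eq_stridedConv (hd L L.lt_succ_self) (w L)
      (f := fun t => stridedConv (∏ j ∈ range L, s j) f t (compositeFilter k s w L))
      (ih fun i hi => hd i (by omega)) i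
    refine hL.trans ?_
    rw [stridedConv_stridedConv, compositeFilter, compositeFilter,
      prod_range_succ, prod_range_succ]

lemma conv_eq_chainConv_iff {k s d : ℕ → ℕ} {L K : ℕ}
    (hd : ∀ i < L, k i + (d (i + 1) - 1) * s i ≤ d i)
    (hd₀ : K + (d L - 1) * ∏ i ∈ range L, s i ≤ d 0) (hdL : 1 ≤ d L)
    (v : Fin K → ℝ) (w : (i : ℕ) → Fin (k i) → ℝ) :
    conv (∏ i ∈ range L, s i) (d 0) (d L) v = chainConv k s d w L ↔
      ofFn K v = compositeFilter k s w L := by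
  constructor
  · intro h
    ext t
    let δ : ℕ → ℝ := Pi.single t 1
    have hδ : ∀ u : Fin (d 0), (fun u : Fin (d 0) => δ u) u = δ u := fun _ => rfl
    have h₁ := conv_apply_eq_stridedConv hd₀ v hδ ⟨0, hdL⟩
    have h₂ := chainConv_apply_eq_stridedConv hd w hδ ⟨0, hdL⟩
    rw [h] at h₁
    rw [← stridedConv_single_zero (∏ i ∈ range L, s i),
      ← stridedConv_single_zero (∏ i ∈ range L, s i)]
    exact h₁.symm.trans h₂
  · intro h
    funext x i
    have hx : ∀ t, x t = Function.extend Fin.val x 0 t :=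
      fun t => (Fin.val_injective.extend_apply x 0 t).symm
    rw [conv_apply_eq_stridedConv hd₀ v hx, h, chainConv_apply_eq_stridedConv hd w hx]

lemma MvPolynomial.IsHomogeneous.eq_of_aeval_one_X_eq {R : Type*} [CommSemiring R] {n : ℕ}
    {p q : MvPolynomial (Fin 2) R} (hp : p.IsHomogeneous n) (hq : q.IsHomogeneous n)
    (h : MvPolynomial.aeval ![1, (Polynomial.X : R[X])] p =
      MvPolynomial.aeval ![1, Polynomial.X] q) :
    p = q := by
  -- swapping the variables turns `aeval ![1, X]` into the dehomogenization `aeval ![X, 1]`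
  let σ := Equiv.swap (0 : Fin 2) 1
  have hσ : ∀ r : MvPolynomial (Fin 2) R, r.IsHomogeneous n →
      (MvPolynomial.aeval ![1, (Polynomial.X : R[X])] r).homogenize n = rename σ r := by
    intro r hr
    refine homogenize_eq_of_isHomogeneous hr.rename_isHomogeneous ?_
    rw [aeval_rename]
    congr 2
    funext i
    fin_cases i <;> rfl
  exact rename_injective σ σ.injective ((hσ p hp).symm.trans (h ▸ hσ q hq))

lemma piP_eq_sum_monomial (s : ℕ) {k : ℕ} (w : Fin k → ℝ) :
    piP s w = ∑ j : Fin k, MvPolynomial.monomial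
      (Finsupp.single 0 (s * (k - 1 - j)) + Finsupp.single 1 (s * j)) (w j) := by
  refine sum_congr rfl fun j _ => ?_
  rw [MvPolynomial.monomial_add_single, ← MvPolynomial.C_mul_X_pow_eq_monomial]

lemma isHomogeneous_piP (s : ℕ) {k : ℕ} (w : Fin k → ℝ) :
    (piP s w).IsHomogeneous (s * (k - 1)) := by
  rw [piP_eq_sum_monomial]
  refine MvPolynomial.IsHomogeneous.sum _ _ _ fun j _ => ?_
  refine MvPolynomial.isHomogeneous_monomial _ ?_
  have := j.isLt
  simp only [map_add, Finsupp.degree_single, ← Nat.mul_add]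
  congr 1
  omega

lemma dvd_of_mem_support_piP {s k : ℕ} {w : Fin k → ℝ} {m : Fin 2 →₀ ℕ}
    (hm : m ∈ (piP s w).support) : s ∣ m 0 ∧ s ∣ m 1 := by
  rw [piP_eq_sum_monomial] at hm
  obtain ⟨j, -, hj⟩ := mem_biUnion.mp (MvPolynomial.support_sum hm)
  obtain rfl := mem_singleton.mp (MvPolynomial.support_monomial_subset hj)
  simp

lemma aeval_piP (s : ℕ) {k : ℕ} (w : Fin k → ℝ) :
    MvPolynomial.aeval ![1, X] (piP s w) = expand ℝ s (ofFn k w) := by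
  simp only [piP, ofFn_eq_sum_monomial, map_sum, expand_monomial, map_mul, map_pow,
    MvPolynomial.aeval_C, MvPolynomial.aeval_X]
  refine sum_congr rfl fun j _ => ?_
  simp [← C_mul_X_pow_eq_monomial, pow_mul, mul_comm]

noncomputable def piCoeff (s k : ℕ) (P : MvPolynomial (Fin 2) ℝ) : Fin k → ℝ :=
  fun j => P.coeff (Finsupp.single 0 (s * (k - 1 - j)) + Finsupp.single 1 (s * j))

lemma piP_piCoeff {s k : ℕ} (hs : 1 ≤ s) (hk : 1 ≤ k) {P : MvPolynomial (Fin 2) ℝ}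
    (hP : P.IsHomogeneous (s * (k - 1))) (hdvd : ∀ m ∈ P.support, s ∣ m 0 ∧ s ∣ m 1) :
    piP s (piCoeff s k P) = P := by
  let e : Fin k → Fin 2 →₀ ℕ :=
    fun j => Finsupp.single 0 (s * (k - 1 - j)) + Finsupp.single 1 (s * j)
  have he : Function.Injective e := fun i j hij =>
    Fin.ext (Nat.eq_of_mul_eq_mul_left hs (by simpa [e] using congrArg (· 1) hij))
  have hsupp : P.support ⊆ univ.image e := by
    intro m hm
    obtain ⟨⟨a, ha⟩, ⟨b, hb⟩⟩ := hdvd m hm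
    have hdeg : m 0 + m 1 = s * (k - 1) := by
      rw [← hP (MvPolynomial.mem_support_iff.mp hm)]
      simp [Finsupp.weight_apply, Finsupp.sum_fintype]
    have hab : a + b = k - 1 := Nat.eq_of_mul_eq_mul_left hs (by rw [mul_add, ← ha, ← hb, hdeg])
    refine mem_image.mpr ⟨⟨b, by omega⟩, mem_univ _, ?_⟩
    ext i
    fin_cases i <;> simp [e, ha, hb, show k - 1 - b = a by omega]
  symm
  calc P = ∑ m ∈ P.support, MvPolynomial.monomial m (P.coeff m) := P.as_sum
    _ = ∑ m ∈ univ.image e, MvPolynomial.monomial m (P.coeff m) :=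
      sum_subset hsupp fun m _ hm => by
        rw [MvPolynomial.notMem_support_iff.mp hm, MvPolynomial.monomial_zero]
    _ = ∑ j, MvPolynomial.monomial (e j) (P.coeff (e j)) := sum_image fun i _ j _ hij => he hij
    _ = _ := (piP_eq_sum_monomial s _).symm


lemma piP_one_eq_prod_piP_iff {k s : ℕ → ℕ} {L K : ℕ}
    (hK : K - 1 = ∑ i ∈ range L, (k i - 1) * ∏ j ∈ range i, s j)
    (v : Fin K → ℝ) (w : (i : ℕ) → Fin (k i) → ℝ) :
    piP 1 v = ∏ i ∈ range L, piP (∏ j ∈ range i, s j) (w i) ↔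
      ofFn K v = compositeFilter k s w L := by
  have haeval : MvPolynomial.aeval ![1, X] (∏ i ∈ range L, piP (∏ j ∈ range i, s j) (w i)) =
      compositeFilter k s w L := by
    simp only [map_prod, aeval_piP, compositeFilter]
  rw [← haeval, ← expand_one (ofFn K v), ← aeval_piP]
  refine ⟨congrArg _, fun h => ?_⟩
  refine MvPolynomial.IsHomogeneous.eq_of_aeval_one_X_eq (n := K - 1) ?_ ?_ h
  · simpa using isHomogeneous_piP 1 v
  · simp only [hK, mul_comm (k _ - 1)]
    exact MvPolynomial.IsHomogeneous.prod _ _ _ fun i _ => isHomogeneous_piP _ _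

lemma dim_zero_sub_one_eq {k s d : ℕ → ℕ} {L : ℕ} (hk : ∀ i < L, 1 ≤ k i)
    (hd : ∀ i < L, d i = k i + (d (i + 1) - 1) * s i) :
    d 0 - 1 = ∑ i ∈ range L, (k i - 1) * ∏ j ∈ range i, s j + (d L - 1) * ∏ i ∈ range L, s i := by
  induction L with
  | zero => simp
  | succ L ih =>
    have hdL : d L - 1 = (k L - 1) + (d (L + 1) - 1) * s L := by
      have := hd L L.lt_succ_self
      have := hk L L.lt_succ_self
      omega
    rw [ih (fun i hi => hk i (by omega)) (fun i hi => hd i (by omega)), sum_range_succ,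
      prod_range_succ, hdL]
    ring

theorem stmt_2 (L : ℕ) (hL : 1 ≤ L) (k s : ℕ → ℕ)
    (hk : ∀ i < L, 1 ≤ k i) (hs : ∀ i < L, 1 ≤ s i)
    (d : ℕ → ℕ) (hdL : 1 ≤ d L) (hd : ∀ i < L, d i = k i + (d (i + 1) - 1) * s i)
    (S : ℕ → ℕ) (hS : ∀ i, S i = ∏ j ∈ Finset.range i, s j)
    (K : ℕ) (hK : K = k 0 + ∑ i ∈ Finset.Ico 1 L, (k i - 1) * S i)
    (v : Fin K → ℝ) :
    (∃ w : (i : ℕ) → Fin (k i) → ℝ,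
        conv (∏ i ∈ Finset.range L, s i) (d 0) (d L) v = chainConv k s d w L) ↔
    (∃ P : ℕ → MvPolynomial (Fin 2) ℝ,
        piP 1 v = ∏ i ∈ Finset.range L, P i ∧
        ∀ i < L, (P i).IsHomogeneous (S i * (k i - 1)) ∧
          ∀ m ∈ (P i).support, S i ∣ m 0 ∧ S i ∣ m 1) := by
  simp only [hS] at hK ⊢
  have hk₀ := hk 0 hL
  have hK₁ : K - 1 = ∑ i ∈ range L, (k i - 1) * ∏ j ∈ range i, s j := by
    rw [hK, sum_range_eq_add_Ico _ hL]
    simp only [prod_range_zero, mul_one]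
    omega
  have hd₀ : K + (d L - 1) * ∏ i ∈ range L, s i ≤ d 0 := by
    have := dim_zero_sub_one_eq hk hd
    have := hd 0 hL
    omega
  have hd' : ∀ i < L, k i + (d (i + 1) - 1) * s i ≤ d i := fun i hi => (hd i hi).ge
  constructor
  · rintro ⟨w, hw⟩
    refine ⟨fun i => piP (∏ j ∈ range i, s j) (w i), ?_, fun i _ => ⟨isHomogeneous_piP _ _,
      fun _ => dvd_of_mem_support_piP⟩⟩
    exact (piP_one_eq_prod_piP_iff hK₁ v w).2 ((conv_eq_chainConv_iff hd' hd₀ hdL v w).1 hw)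
  · rintro ⟨P, hP, hPi⟩
    let w i := piCoeff (∏ j ∈ range i, s j) (k i) (P i)
    have hPw : ∀ i ∈ range L, P i = piP (∏ j ∈ range i, s j) (w i) := fun i hi =>
      have hi := mem_range.mp hi
      (piP_piCoeff (one_le_prod' fun j hj => hs j ((mem_range.mp hj).trans hi)) (hk i hi)
        (hPi i hi).1 (hPi i hi).2).symm
    refine ⟨w, (conv_eq_chainConv_iff hd' hd₀ hdL v w).2 ?_⟩
    exact (piP_one_eq_prod_piP_iff hK₁ v w).1 (hP.trans (prod_congr rfl hPw))
end

section
/- For complex numbers A, B, C, D, E, there exist a, b, c, d, e ∈ ℂ such that A·x⁴ + B·x³y + C·x²y² + D·xy³ + E·y⁴ = (d·x² + e·y²)·(a·x² + b·xy + c·y²) in ℂ[x,y] if and only if A·D² + B²·E − B·C·D = 0. -/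
/-
Comparing coefficients, the factorization amounts to `A = da`, `B = db`, `C = dc + ea`, `D = eb`,
`E = ec`, and these force `AD² + B²E - BCD = 0`. Conversely, if `B ≠ 0` one can take `d = 1`,
`e = D / B`; if `B = 0` then `AD² = 0`, and either `A = 0` (take `d = 0`) or `D = 0`, when the
form is a quadratic in `x²`, `y²` and splits over ℂ.
-/

open MvPolynomial

section CommRing

variable {R : Type*} [CommRing R]

noncomputable def binaryQuartic (A B C D E : R) : MvPolynomial (Fin 2) R :=
  MvPolynomial.C A * X 0 ^ 4 + MvPolynomial.C B * X 0 ^ 3 * X 1 +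
    MvPolynomial.C C * X 0 ^ 2 * X 1 ^ 2 + MvPolynomial.C D * X 0 * X 1 ^ 3 +
    MvPolynomial.C E * X 1 ^ 4

theorem binaryQuartic_inj {A B C D E A' B' C' D' E' : R} :
    binaryQuartic A B C D E = binaryQuartic A' B' C' D' E' ↔
      A = A' ∧ B = B' ∧ C = C' ∧ D = D' ∧ E = E' := by
  refine ⟨fun h => ?_, by rintro ⟨rfl, rfl, rfl, rfl, rfl⟩; rfl⟩
  -- dehomogenize at `y = 1` and compare the coefficients of the resulting polynomial in `x`
  have h' := congrArg (fun p ↦ let q : Polynomial R := aeval ![Polynomial.X, 1] p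
    (q.coeff 4, q.coeff 3, q.coeff 2, q.coeff 1, q.coeff 0)) h
  simpa [binaryQuartic, Polynomial.coeff_X, Polynomial.coeff_X_pow] using h'

theorem mul_eq_binaryQuartic (a b c d e : R) :
    (MvPolynomial.C d * X 0 ^ 2 + MvPolynomial.C e * X 1 ^ 2) *
        (MvPolynomial.C a * X 0 ^ 2 + MvPolynomial.C b * X 0 * X 1 +
          MvPolynomial.C c * X 1 ^ 2 : MvPolynomial (Fin 2) R) =
      binaryQuartic (d * a) (d * b) (d * c + e * a) (e * b) (e * c) := by
  simp only [binaryQuartic, map_mul, map_add]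
  ring

end CommRing

theorem exists_factor_coeffs_of_ne_zero {K : Type*} [Field K] {A B C D E : K} (hB : B ≠ 0)
    (h : A * D ^ 2 + B ^ 2 * E - B * C * D = 0) :
    ∃ a b c d e : K, A = d * a ∧ B = d * b ∧ C = d * c + e * a ∧ D = e * b ∧ E = e * c := by
  refine ⟨A, B, C - A * D / B, 1, D / B, by ring, by ring, ?_, ?_, ?_⟩
  · field_simp; ring
  · field_simp
  · field_simp
    linear_combination h

theorem exists_factor_coeffs_of_root {R : Type*} [CommRing R] {A C E r : R}
    (hr : A * r ^ 2 + C * r + E = 0) :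
    ∃ a b c d e : R, A = d * a ∧ 0 = d * b ∧ C = d * c + e * a ∧ 0 = e * b ∧ E = e * c :=
  -- `A t² + C t + E = (t - r) (A t + C + r A)`, with `t = x² / y²`
  ⟨A, 0, C + r * A, 1, -r, by ring, by ring, by ring, by ring, by linear_combination hr⟩

theorem exists_factor_coeffs_iff {K : Type*} [Field K] [IsAlgClosed K] {A B C D E : K} :
    (∃ a b c d e : K, A = d * a ∧ B = d * b ∧ C = d * c + e * a ∧ D = e * b ∧ E = e * c) ↔
      A * D ^ 2 + B ^ 2 * E - B * C * D = 0 := by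
  refine ⟨fun ⟨a, b, c, d, e, hA, hB, hC, hD, hE⟩ => by subst_vars; ring, fun h => ?_⟩
  rcases ne_or_eq B 0 with hB | rfl
  · exact exists_factor_coeffs_of_ne_zero hB h
  rcases eq_or_ne A 0 with rfl | hA
  · exact ⟨C, D, E, 0, 1, by ring, by ring, by ring, by ring, by ring⟩
  obtain rfl : D = 0 := by simpa [hA] using h
  obtain ⟨r, hr⟩ := IsAlgClosed.exists_root
    (Polynomial.C A * Polynomial.X ^ 2 + Polynomial.C C * Polynomial.X + Polynomial.C E)
    (by rw [Polynomial.degree_quadratic hA]; decide)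
  exact exists_factor_coeffs_of_root (by simpa using hr)

open MvPolynomial in
theorem stmt_12 (A B C D E : ℂ) :
    (∃ a b c d e : ℂ,
        (MvPolynomial.C A * X 0 ^ 4 + MvPolynomial.C B * X 0 ^ 3 * X 1 +
            MvPolynomial.C C * X 0 ^ 2 * X 1 ^ 2 + MvPolynomial.C D * X 0 * X 1 ^ 3 +
            MvPolynomial.C E * X 1 ^ 4
          : MvPolynomial (Fin 2) ℂ) =
        (MvPolynomial.C d * X 0 ^ 2 + MvPolynomial.C e * X 1 ^ 2) *
          (MvPolynomial.C a * X 0 ^ 2 + MvPolynomial.C b * X 0 * X 1 +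
            MvPolynomial.C c * X 1 ^ 2)) ↔
    A * D ^ 2 + B ^ 2 * E - B * C * D = 0 := by
  simp_rw [mul_eq_binaryQuartic]
  show (∃ a b c d e : ℂ, binaryQuartic A B C D E = _) ↔ _
  simp_rw [binaryQuartic_inj]
  exact exists_factor_coeffs_iff
end

section
/- Let k, s, d_L ≥ 1 and d_0 = k + (d_L−1)s. For a filter w ∈ ℝ^k, let A(w) be the d_L × d_0 convolutional matrix of α_{w,s}, i.e. A(w)_{i,j} = w[j − i·s] if 0 ≤ j − i·s ≤ k−1 and 0 otherwise (0-indexed). Then for every matrix M ∈ ℝ^{d_0 × d_0} and all filters w, v ∈ ℝ^k: tr( A(w) · M · A(v)ᵀ ) = wᵀ · ψ(M) · v, where ψ(M) ∈ ℝ^{k × k} has entries ψ(M)_{a,b} = Σ_{m=0}^{d_L−1} M_{a+sm, b+sm} (0 ≤ a, b ≤ k−1). -/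
open scoped Matrix

/-- The `d_L × d_0` convolutional matrix of `α_{w,s}`:
`A(w)_{i,j} = w[j - i·s]` if `0 ≤ j - i·s ≤ k-1` and `0` otherwise (0-indexed). -/
def convMat (k s d0 dL : ℕ) (w : Fin k → ℝ) : Matrix (Fin dL) (Fin d0) ℝ :=
  fun i j =>
    if h : i.val * s ≤ j.val ∧ j.val - i.val * s < k
      then w ⟨j.val - i.val * s, h.2⟩ else 0

/-- `ψ(M)_{a,b} = ∑_{m=0}^{d_L-1} M_{a+sm, b+sm}` (indices are in range when
`d0 = k + (dL-1)·s`; out-of-range indices contribute `0`). -/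
def psiMat (k s d0 dL : ℕ) (M : Matrix (Fin d0) (Fin d0) ℝ) : Matrix (Fin k) (Fin k) ℝ :=
  fun a b => ∑ m : Fin dL,
    if h : a.val + s * m.val < d0 ∧ b.val + s * m.val < d0
      then M ⟨a.val + s * m.val, h.1⟩ ⟨b.val + s * m.val, h.2⟩ else 0

lemma conv_bound {k s d0 dL : ℕ} (hd0 : d0 = k + (dL - 1) * s)
    (a : Fin k) (i : Fin dL) : a.val + s * i.val < d0 := by
  have hi : i.val ≤ dL - 1 := Nat.le_sub_one_of_lt i.isLt
  have := Nat.mul_le_mul_left s hi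
  have := a.isLt
  subst hd0
  have hm : (dL - 1) * s = s * (dL - 1) := Nat.mul_comm _ _
  omega

lemma conv_row_sum {k s d0 dL : ℕ} (hd0 : d0 = k + (dL - 1) * s)
    (w : Fin k → ℝ) (i : Fin dL) (f : Fin d0 → ℝ) :
    ∑ j, convMat k s d0 dL w i j * f j
      = ∑ a : Fin k, w a * f ⟨a.val + s * i.val, conv_bound hd0 a i⟩ := by
  classical
  set e : Fin k → Fin d0 := fun a => ⟨a.val + s * i.val, conv_bound hd0 a i⟩ with he
  have hinj : Function.Injective e := by
    intro a b hab
    have := congrArg Fin.val hab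
    simp [he] at this
    exact Fin.ext this
  have hsub : Finset.univ.image e ⊆ Finset.univ := Finset.subset_univ _
  rw [← Finset.sum_subset hsub]
  · rw [Finset.sum_image (fun a _ b _ h => hinj h)]
    apply Finset.sum_congr rfl
    intro a _
    have hc : i.val * s ≤ (e a).val ∧ (e a).val - i.val * s < k := by
      simp [he, Nat.mul_comm]
    rw [convMat, dif_pos hc]
    congr 1
    congr 1
    apply Fin.ext
    simp [he, Nat.mul_comm s i.val]
  · intro j _ hj
    rw [convMat]
    split
    · next h =>
      exfalso
      apply hj
      simp only [Finset.mem_image, Finset.mem_univ, true_and]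
      refine ⟨⟨j.val - i.val * s, h.2⟩, Fin.ext ?_⟩
      have hm : s * i.val = i.val * s := Nat.mul_comm _ _
      simp only [he]
      omega
    · ring

theorem stmt_14 (k s dL d0 : ℕ) (hk : 1 ≤ k) (hs : 1 ≤ s) (hdL : 1 ≤ dL)
    (hd0 : d0 = k + (dL - 1) * s)
    (M : Matrix (Fin d0) (Fin d0) ℝ) (w v : Fin k → ℝ) :
    Matrix.trace (convMat k s d0 dL w * M * (convMat k s d0 dL v)ᵀ) =
      w ⬝ᵥ (psiMat k s d0 dL M).mulVec v := by
  classical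
  have lhs : Matrix.trace (convMat k s d0 dL w * M * (convMat k s d0 dL v)ᵀ)
      = ∑ i : Fin dL, ∑ b : Fin k, v b *
          ∑ a : Fin k, w a * M ⟨a.val + s * i.val, conv_bound hd0 a i⟩
            ⟨b.val + s * i.val, conv_bound hd0 b i⟩ := by
    rw [Matrix.trace]
    apply Finset.sum_congr rfl
    intro i _
    simp only [Matrix.diag_apply, Matrix.mul_apply, Matrix.transpose_apply]
    have : ∑ j2, (∑ j1, convMat k s d0 dL w i j1 * M j1 j2) * convMat k s d0 dL v i j2
        = ∑ j2, convMat k s d0 dL v i j2 * ∑ j1, convMat k s d0 dL w i j1 * M j1 j2 := by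
      apply Finset.sum_congr rfl; intros; ring
    rw [this, conv_row_sum hd0]
    apply Finset.sum_congr rfl
    intro b _
    congr 1
    exact conv_row_sum hd0 w i _
  have rhs : w ⬝ᵥ (psiMat k s d0 dL M).mulVec v
      = ∑ a : Fin k, ∑ b : Fin k, ∑ i : Fin dL,
          v b * (w a * M ⟨a.val + s * i.val, conv_bound hd0 a i⟩
            ⟨b.val + s * i.val, conv_bound hd0 b i⟩) := by
    rw [dotProduct]
    apply Finset.sum_congr rfl
    intro a _
    rw [Matrix.mulVec, dotProduct, Finset.mul_sum]
    apply Finset.sum_congr rfl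
    intro b _
    rw [psiMat]
    rw [Finset.sum_mul, Finset.mul_sum]
    apply Finset.sum_congr rfl
    intro i _
    rw [dif_pos ⟨conv_bound hd0 a i, conv_bound hd0 b i⟩]
    ring
  rw [lhs, rhs]
  simp only [Finset.mul_sum]
  conv_lhs => rw [Finset.sum_comm]
  conv_rhs => rw [Finset.sum_comm]
  apply Finset.sum_congr rfl
  intro b _
  exact Finset.sum_comm
end
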